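/- (Corollary 4) The Pursuer has a winning strategy in a position independent generalized Cops and Robbers game G if and only if the round summary digraph R_G admits a removable vertex ordering. -/

import Mathlib

open Classical

/-- A generalized Cops and Robbers game on Pursuer positions `PP` and Evader positions `PE`.
`F` is the set of final positions, `I` the set of allowed start positions, and
`AP`/`AE` give the (nonempty) sets of allowed moves of the Pursuer/Evader from a
non-final position (a move changes only that player's own coordinate). -/
structure GCR (PP PE : Type*) where
  F : PP → PE → Prop
  I : PP → PE → Prop
  AP : PP → PE → Set PP
  AE : PP → PE → Set PE
  I_nonempty : ∃ p q, I p q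
  AP_nonempty : ∀ p q, ¬ F p q → (AP p q).Nonempty
  AE_nonempty : ∀ p q, ¬ F p q → (AE p q).Nonempty

namespace GCR

variable {PP PE : Type*}

/-- The Pursuer's allowed start positions `I_P`. -/
def IP (G : GCR PP PE) (p : PP) : Prop := ∃ q, G.I p q

/-- The Evader's allowed start positions `I_E(p)` against the Pursuer start `p`. -/
def IE (G : GCR PP PE) (p : PP) (q : PE) : Prop := G.I p q

/-- The sequence of relations `≼_i` from Evader positions to Pursuer positions:
`q ≼_0 p` iff `(p,q) ∈ F`; and for `i ≥ 1`, `q ≼_i p` iff `(p,q) ∈ F` or for every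
`x ∈ A_E(p,q)` either `(p,x) ∈ F` or there is `w ∈ A_P(p,x)` with `x ≼_j w` for some `j < i`. -/
def rel (G : GCR PP PE) : ℕ → PE → PP → Prop
  | 0, q, p => G.F p q
  | (i+1), q, p => G.F p q ∨
      ∀ x ∈ G.AE p q, G.F p x ∨ ∃ w ∈ G.AP p x, ∃ j, ∃ _ : j < i + 1, G.rel j x w
  termination_by i _ _ => i
  decreasing_by omega

/-- The stabilized relation `≼`. -/
def Rel (G : GCR PP PE) (q : PE) (p : PP) : Prop := ∃ i, G.rel i q p

/-- A strategy for the Pursuer: an initial position together with a move for every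
finite history of positions (most recent first). -/
structure PStrat (G : GCR PP PE) where
  init : PP
  move : List (PP × PE) → PP

/-- A strategy for the Evader: an initial position (depending on the Pursuer's choice)
together with a move for every finite history of positions (most recent first). -/
structure EStrat (G : GCR PP PE) where
  init : PP → PE
  move : List (PP × PE) → PE

/-- A Pursuer strategy plays allowed moves at every non-final position. -/
def PStrat.MovesValid {G : GCR PP PE} (σ : PStrat G) : Prop :=
  ∀ (h : List (PP × PE)) (c : PP × PE), ¬ G.F c.1 c.2 → σ.move (c :: h) ∈ G.AP c.1 c.2

/-- An Evader strategy plays allowed moves at every non-final position. -/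
def EStrat.MovesValid {G : GCR PP PE} (τ : EStrat G) : Prop :=
  ∀ (h : List (PP × PE)) (c : PP × PE), ¬ G.F c.1 c.2 → τ.move (c :: h) ∈ G.AE c.1 c.2

/-- A valid Pursuer strategy: the initial position is an allowed start position,
and all moves are allowed. -/
def PStrat.Valid {G : GCR PP PE} (σ : PStrat G) : Prop :=
  G.IP σ.init ∧ σ.MovesValid

/-- A valid Evader strategy: the initial position is an allowed response to any allowed
Pursuer start position, and all moves are allowed. -/
def EStrat.Valid {G : GCR PP PE} (τ : EStrat G) : Prop :=
  (∀ p, G.IP p → G.IE p (τ.init p)) ∧ τ.MovesValid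

/-- The play of the game determined by strategies `σ` and `τ`: first both players choose
their start positions, then they move alternately with the Pursuer moving first.
Returns the current position after `n` single moves together with the history so far. -/
def play (G : GCR PP PE) (σ : PStrat G) (τ : EStrat G) : ℕ → (PP × PE) × List (PP × PE)
  | 0 => ((σ.init, τ.init σ.init), [(σ.init, τ.init σ.init)])
  | (n+1) =>
      let s := play G σ τ n
      let nxt := if n % 2 = 0 then (σ.move s.2, s.1.2) else (s.1.1, τ.move s.2)
      (nxt, nxt :: s.2)

/-- The position after `n` single moves of the play determined by `σ` and `τ`. -/
def pos (G : GCR PP PE) (σ : PStrat G) (τ : EStrat G) (n : ℕ) : PP × PE :=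
  (play G σ τ n).1

/-- Play from a given mid-game position `start`; `pFirst = true` means the Pursuer is
next to move. The players move alternately. Returns the current position after `n`
single moves together with the history so far. -/
def playFrom (G : GCR PP PE) (σ : PStrat G) (τ : EStrat G) (start : PP × PE)
    (pFirst : Bool) : ℕ → (PP × PE) × List (PP × PE)
  | 0 => (start, [start])
  | (n+1) =>
      let s := playFrom G σ τ start pFirst n
      let nxt := if (decide (n % 2 = 0)) == pFirst
        then (σ.move s.2, s.1.2) else (s.1.1, τ.move s.2)
      (nxt, nxt :: s.2)

/-- The position after `n` single moves of the play from state `(start, pFirst)`. -/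
def posFrom (G : GCR PP PE) (σ : PStrat G) (τ : EStrat G) (start : PP × PE)
    (pFirst : Bool) (n : ℕ) : PP × PE :=
  (playFrom G σ τ start pFirst n).1

/-- The Pursuer has a winning strategy: a valid strategy such that against every valid
Evader strategy the position eventually belongs to `F`. -/
def PursuerWins (G : GCR PP PE) : Prop :=
  ∃ σ : PStrat G, σ.Valid ∧ ∀ τ : EStrat G, τ.Valid →
    ∃ n, G.F (pos G σ τ n).1 (pos G σ τ n).2

/-- The Evader has a winning strategy: a valid strategy such that against every valid
Pursuer strategy the position never belongs to `F`. -/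
def EvaderWins (G : GCR PP PE) : Prop :=
  ∃ τ : EStrat G, τ.Valid ∧ ∀ σ : PStrat G, σ.Valid →
    ∀ n, ¬ G.F (pos G σ τ n).1 (pos G σ τ n).2

/-! ### The state digraph and its labelling -/

/-- The initial labelling of the state digraph: final states get `0`, all others `∞`.
A state is a position together with a `Bool` which is `true` when the Pursuer is next
to move. -/
noncomputable def labelInit (G : GCR PP PE) : (PP × PE) × Bool → ℕ∞ :=
  fun s => if G.F s.1.1 s.1.2 then 0 else ⊤

/-- One round of updates of the labelling procedure: a non-final Pursuer-to-move state
gets `1 +` the minimum label over its out-neighbours, and a non-final Evader-to-move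
state gets `1 +` the maximum label over its out-neighbours. -/
noncomputable def labelStep (G : GCR PP PE) (f : (PP × PE) × Bool → ℕ∞) :
    (PP × PE) × Bool → ℕ∞ :=
  fun s =>
    if G.F s.1.1 s.1.2 then 0
    else if s.2 then 1 + ⨅ w ∈ G.AP s.1.1 s.1.2, f ((w, s.1.2), false)
    else 1 + ⨆ x ∈ G.AE s.1.1 s.1.2, f ((s.1.1, x), true)

/-- The stable labelling of the state digraph, obtained by repeating the update
procedure until no label changes (the iterates decrease pointwise, so the stable
labelling is the pointwise infimum of the iterates). -/
noncomputable def label (G : GCR PP PE) (s : (PP × PE) × Bool) : ℕ∞ :=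
  ⨅ n : ℕ, (G.labelStep)^[n] G.labelInit s

/-! ### Length of the game -/

/-- The number of moves the Pursuer makes before the position first lies in `F`, in the
play determined by `σ` and `τ` (the Pursuer moves at odd time-steps, so has made
`(n+1)/2` moves by time-step `n`); `⊤` if the position never lies in `F`. -/
noncomputable def captureMoves (G : GCR PP PE) (σ : PStrat G) (τ : EStrat G) : ℕ∞ :=
  ⨅ (n : ℕ) (_ : G.F (pos G σ τ n).1 (pos G σ τ n).2), (((n + 1) / 2 : ℕ) : ℕ∞)

/-- The length of the game under optimal play: the minimum over valid Pursuer strategies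
of the maximum over valid Evader strategies of the number of Pursuer moves made before
the position first lies in `F`. -/
noncomputable def gameLength (G : GCR PP PE) : ℕ∞ :=
  ⨅ (σ : PStrat G) (_ : σ.Valid), ⨆ (τ : EStrat G) (_ : τ.Valid), G.captureMoves σ τ

/-- The quantity `ℓ(p,q)` from Corollary 1. -/
noncomputable def ell (G : GCR PP PE) (p : PP) (q : PE) : ℕ∞ :=
  if G.Rel q p then ⨅ (j : ℕ) (_ : G.rel j q p), (j : ℕ∞)
  else 1 + ⨆ w ∈ G.AP p q, ⨅ (j : ℕ) (_ : G.rel j q w), (j : ℕ∞)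

/-! ### Position independent games -/

/-- A game is position independent (with position digraphs given by out-neighbour maps
`GP` and `GE`) if, from any non-final position, the allowed moves of the Pursuer depend
only on the Pursuer's position and the allowed moves of the Evader depend only on the
Evader's position. -/
def PositionIndependent (G : GCR PP PE) (GP : PP → Set PP) (GE : PE → Set PE) : Prop :=
  ∀ p q, ¬ G.F p q → G.AP p q = GP p ∧ G.AE p q = GE q

/-- A vertex `(p,q)` of the round summary digraph is removable with respect to a set `S`
of vertices. -/
def Removable (G : GCR PP PE) (GP : PP → Set PP) (GE : PE → Set PE)
    (v : PP × PE) (S : Set (PP × PE)) : Prop :=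
  G.F v.1 v.2 ∨ ∀ x ∈ GE v.2, G.F v.1 x ∨ ∃ y ∈ GP v.1, (y, x) ∈ S

/-- A removable vertex ordering of the round summary digraph: a sequence of vertices in
which each element is removable with respect to the set of vertices preceding it, and
there is a Pursuer start position `p ∈ I_P` such that for all `q ∈ I_E(p)` either
`(p,q) ∈ F` or the Pursuer has an allowed move `w` with `(w,q)` in the sequence. -/
def RemovableOrdering (G : GCR PP PE) (GP : PP → Set PP) (GE : PE → Set PE)
    (L : List (PP × PE)) : Prop :=
  (∀ i : Fin L.length, G.Removable GP GE (L.get i)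
      {w | ∃ j : Fin L.length, (j : ℕ) < (i : ℕ) ∧ L.get j = w}) ∧
  ∃ p, G.IP p ∧ ∀ q, G.IE p q → G.F p q ∨ ∃ w ∈ GP p, (w, q) ∈ L

/-! `G.rel n q p` says that from `(p, q)`, with the Evader to move, the Pursuer can force a final
position within `n` rounds. With finitely many Evader positions, the union `G.Rel` of these
relations is closed under one more round. Hence the Pursuer wins exactly when some start `p`
lets him answer every Evader start by a move into `G.Rel`: he then always moves to a position
of least rank, and otherwise the Evader can stay outside `G.Rel` forever. In a position
independent game, removability with respect to `S` is the one-round condition for reaching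
`S`, so every vertex of a removable ordering lies in `G.Rel`; conversely a vertex of rank
`n + 1` is appended to the concatenation of orderings for the finitely many rank-`n`
vertices it depends on. -/

section Rank

variable {G : GCR PP PE} {p : PP} {q : PE}

lemma rel_zero : G.rel 0 q p ↔ G.F p q := by
  rw [rel]

lemma rel_succ_of_rel {n : ℕ} (h : G.rel n q p) : G.rel (n + 1) q p := by
  cases n with
  | zero => rw [rel]; exact Or.inl (rel_zero.1 h)
  | succ n =>
    rw [rel] at h ⊢
    exact h.imp_right fun h x hx => (h x hx).imp_right
      fun ⟨w, hw, j, hj, hjw⟩ => ⟨w, hw, j, by omega, hjw⟩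

lemma rel_mono {m n : ℕ} (hmn : m ≤ n) (h : G.rel m q p) : G.rel n q p := by
  induction hmn with
  | refl => exact h
  | step _ ih => exact rel_succ_of_rel ih

lemma rel_succ_iff {n : ℕ} : G.rel (n + 1) q p ↔
    G.F p q ∨ ∀ x ∈ G.AE p q, G.F p x ∨ ∃ w ∈ G.AP p x, G.rel n x w := by
  rw [rel]
  refine or_congr_right <| forall₂_congr fun x _ => or_congr_right <| exists_congr fun w =>
    and_congr_right fun _ => ⟨fun ⟨j, hj, h⟩ => rel_mono (by omega) h, fun h => ⟨n, by omega, h⟩⟩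

lemma Rel_of_F (h : G.F p q) : G.Rel q p :=
  ⟨0, rel_zero.2 h⟩

lemma Rel_iff [Fintype PE] : G.Rel q p ↔
    G.F p q ∨ ∀ x ∈ G.AE p q, G.F p x ∨ ∃ w ∈ G.AP p x, G.Rel x w := by
  constructor
  · rintro ⟨_ | n, hn⟩
    · exact Or.inl (rel_zero.1 hn)
    · exact (rel_succ_iff.1 hn).imp_right fun h x hx =>
        (h x hx).imp_right fun ⟨w, hw, hr⟩ => ⟨w, hw, n, hr⟩
  · rintro (hF | h)
    · exact Rel_of_F hF
    have hrank : ∀ x, ∃ n, x ∈ G.AE p q → G.F p x ∨ ∃ w ∈ G.AP p x, G.rel n x w := by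
      intro x
      by_cases hx : x ∈ G.AE p q
      · rcases h x hx with hF | ⟨w, hw, n, hn⟩
        · exact ⟨0, fun _ => Or.inl hF⟩
        · exact ⟨n, fun _ => Or.inr ⟨w, hw, hn⟩⟩
      · exact ⟨0, fun hx' => absurd hx' hx⟩
    choose N hN using hrank
    refine ⟨Finset.univ.sup N + 1, rel_succ_iff.2 (Or.inr fun x hx => ?_)⟩
    exact (hN x hx).imp_right fun ⟨w, hw, hr⟩ =>
      ⟨w, hw, rel_mono (Finset.le_sup (Finset.mem_univ x)) hr⟩

end Rank

section Play

variable {G : GCR PP PE} (σ : PStrat G) (τ : EStrat G)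

lemma play_snd_eq_cons (n : ℕ) : ∃ h, (G.play σ τ n).2 = G.pos σ τ n :: h := by
  cases n <;> exact ⟨_, rfl⟩

lemma pos_two_mul_add_one (m : ℕ) : ∃ h,
    G.pos σ τ (2 * m + 1) = (σ.move (G.pos σ τ (2 * m) :: h), (G.pos σ τ (2 * m)).2) := by
  obtain ⟨h, hh⟩ := play_snd_eq_cons σ τ (2 * m)
  exact ⟨h, by simp [pos, play, hh]⟩

lemma pos_two_mul_succ (m : ℕ) : ∃ h,
    G.pos σ τ (2 * (m + 1)) =
      ((G.pos σ τ (2 * m + 1)).1, τ.move (G.pos σ τ (2 * m + 1) :: h)) := by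
  obtain ⟨h, hh⟩ := play_snd_eq_cons σ τ (2 * m + 1)
  refine ⟨h, ?_⟩
  show (G.play σ τ (2 * m + 1 + 1)).1 = _
  rw [play]
  simp only [Nat.mul_add_mod_self_left, Nat.one_mod, one_ne_zero, if_false, hh]
  rfl

end Play

def IsWinningStart (G : GCR PP PE) (p : PP) : Prop :=
  G.IP p ∧ ∀ q, G.IE p q → G.F p q ∨ ∃ w ∈ G.AP p q, G.Rel q w

section Pursuer

def IsOptimalMove (G : GCR PP PE) (p : PP) (q : PE) (w : PP) : Prop :=
  w ∈ G.AP p q ∧ ∀ k, (∃ w' ∈ G.AP p q, G.rel k q w') → G.rel k q w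

variable {G : GCR PP PE} {p : PP} {q : PE}

lemma exists_isOptimalMove (hF : ¬ G.F p q) : ∃ w, G.IsOptimalMove p q w := by
  by_cases h : ∃ k, ∃ w ∈ G.AP p q, G.rel k q w
  · obtain ⟨w, hw, hk⟩ := Nat.find_spec h
    exact ⟨w, hw, fun k hk' => rel_mono (Nat.find_min' h hk') hk⟩
  · obtain ⟨w, hw⟩ := G.AP_nonempty p q hF
    exact ⟨w, hw, fun k hk => absurd ⟨k, hk⟩ h⟩

def PStrat.Optimal (σ : PStrat G) : Prop :=
  ∀ h c, ¬ G.F c.1 c.2 → G.IsOptimalMove c.1 c.2 (σ.move (c :: h))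

lemma PStrat.Optimal.movesValid {σ : PStrat G} (hσ : σ.Optimal) : σ.MovesValid :=
  fun h c hF => (hσ h c hF).1

lemma exists_pStrat_optimal (p₀ : PP) : ∃ σ : PStrat G, σ.init = p₀ ∧ σ.Optimal := by
  have hmove : ∀ c : PP × PE, ∃ w, ¬ G.F c.1 c.2 → G.IsOptimalMove c.1 c.2 w := fun c =>
    if hF : G.F c.1 c.2 then ⟨c.1, fun h => absurd hF h⟩
    else (exists_isOptimalMove hF).imp fun _ h _ => h
  choose f hf using hmove
  exact ⟨⟨p₀, fun | [] => p₀ | c :: _ => f c⟩, rfl, fun _ c => hf c⟩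

/-- Each round lowers the rank: after the Evader's move some Pursuer move has smaller rank,
and the optimal reply attains it. -/
lemma exists_F_pos_of_rel {σ : PStrat G} {τ : EStrat G} (hσ : σ.Optimal)
    (hτ : τ.MovesValid) (k : ℕ) : ∀ m, G.rel k (G.pos σ τ (2 * m + 1)).2
      (G.pos σ τ (2 * m + 1)).1 → ∃ n, G.F (G.pos σ τ n).1 (G.pos σ τ n).2 := by
  induction k using Nat.strong_induction_on with
  | _ k ih =>
  intro m hk
  set c := G.pos σ τ (2 * m + 1) with hc
  by_cases hF : G.F c.1 c.2
  · exact ⟨_, hF⟩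
  obtain _ | j := k
  · exact absurd (rel_zero.1 hk) hF
  obtain ⟨h, hx⟩ := pos_two_mul_succ σ τ m
  rw [← hc] at hx
  by_cases hFx : G.F c.1 (τ.move (c :: h))
  · exact ⟨2 * (m + 1), by rw [hx]; exact hFx⟩
  obtain ⟨w, hw, hwr⟩ := ((rel_succ_iff.1 hk).resolve_left hF _ (hτ h c hF)).resolve_left hFx
  obtain ⟨h', hy⟩ := pos_two_mul_add_one σ τ (m + 1)
  have hF' : ¬ G.F (G.pos σ τ (2 * (m + 1))).1 (G.pos σ τ (2 * (m + 1))).2 := by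
    rw [hx]; exact hFx
  have hmove : ∃ w ∈ G.AP (G.pos σ τ (2 * (m + 1))).1 (G.pos σ τ (2 * (m + 1))).2,
      G.rel j (G.pos σ τ (2 * (m + 1))).2 w := by
    rw [hx]; exact ⟨w, hw, hwr⟩
  refine ih j (by omega) (m + 1) ?_
  rw [hy]
  exact (hσ h' _ hF').2 j hmove

lemma pursuerWins_of_isWinningStart (hp : G.IsWinningStart p) : G.PursuerWins := by
  obtain ⟨σ, rfl, hσ⟩ := exists_pStrat_optimal (G := G) p
  refine ⟨σ, ⟨hp.1, hσ.movesValid⟩, fun τ hτ => ?_⟩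
  rcases hp.2 _ (hτ.1 _ hp.1) with hF | ⟨w, hw, k, hk⟩
  · exact ⟨0, hF⟩
  by_cases hF : G.F (G.pos σ τ 0).1 (G.pos σ τ 0).2
  · exact ⟨0, hF⟩
  obtain ⟨h, h1⟩ := pos_two_mul_add_one σ τ 0
  exact exists_F_pos_of_rel hσ hτ.2 k 0 (by rw [h1]; exact (hσ h _ hF).2 k ⟨w, hw, hk⟩)

end Pursuer

section Evader

def EvaderSafe (G : GCR PP PE) (p : PP) (q : PE) : Prop :=
  ¬ G.F p q ∧ ∀ w ∈ G.AP p q, ¬ G.Rel q w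

variable {G : GCR PP PE} {p : PP} {q : PE}

lemma exists_evaderSafe_move [Fintype PE] (h : ¬ G.Rel q p) :
    ∃ x ∈ G.AE p q, G.EvaderSafe p x := by
  contrapose! h
  refine Rel_iff.2 (Or.inr fun x hx => or_iff_not_imp_left.2 fun hF => ?_)
  simpa [EvaderSafe, hF] using h x hx

def EStrat.Safe (τ : EStrat G) : Prop :=
  ∀ h c, ¬ G.F c.1 c.2 → ¬ G.Rel c.2 c.1 → G.EvaderSafe c.1 (τ.move (c :: h))

lemma exists_eStrat_safe [Fintype PE] (init : PP → PE) :
    ∃ τ : EStrat G, τ.init = init ∧ τ.MovesValid ∧ τ.Safe := by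
  have hmove : ∀ c : PP × PE, ∃ x, ¬ G.F c.1 c.2 →
      x ∈ G.AE c.1 c.2 ∧ (¬ G.Rel c.2 c.1 → G.EvaderSafe c.1 x) := by
    intro c
    by_cases hF : G.F c.1 c.2
    · exact ⟨c.2, fun h => absurd hF h⟩
    by_cases hR : G.Rel c.2 c.1
    · obtain ⟨x, hx⟩ := G.AE_nonempty c.1 c.2 hF
      exact ⟨x, fun _ => ⟨hx, fun h => absurd hR h⟩⟩
    · obtain ⟨x, hx, hsafe⟩ := exists_evaderSafe_move hR
      exact ⟨x, fun _ => ⟨hx, fun _ => hsafe⟩⟩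
  choose f hf using hmove
  obtain ⟨-, q₀, -⟩ := G.I_nonempty
  exact ⟨⟨init, fun | [] => q₀ | c :: _ => f c⟩, rfl, fun _ c hF => (hf c hF).1,
    fun _ c hF => (hf c hF).2⟩

lemma not_Rel_pos_two_mul_add_one {σ : PStrat G} {τ : EStrat G} (hσ : σ.MovesValid) {m : ℕ}
    (hm : G.EvaderSafe (G.pos σ τ (2 * m)).1 (G.pos σ τ (2 * m)).2) :
    ¬ G.Rel (G.pos σ τ (2 * m + 1)).2 (G.pos σ τ (2 * m + 1)).1 := by
  obtain ⟨h, h1⟩ := pos_two_mul_add_one σ τ m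
  rw [h1]
  exact hm.2 _ (hσ h _ hm.1)

lemma evaderSafe_pos_two_mul {σ : PStrat G} {τ : EStrat G} (hσ : σ.MovesValid) (hτ : τ.Safe)
    (h₀ : G.EvaderSafe σ.init (τ.init σ.init)) (m : ℕ) :
    G.EvaderSafe (G.pos σ τ (2 * m)).1 (G.pos σ τ (2 * m)).2 := by
  induction m with
  | zero => exact h₀
  | succ m ih =>
    have hR := not_Rel_pos_two_mul_add_one hσ ih
    obtain ⟨h, h2⟩ := pos_two_mul_succ σ τ m
    rw [h2]
    exact hτ h _ (fun hF => hR (Rel_of_F hF)) hR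

lemma exists_evaderSafe_start (hp : G.IP p) (h : ¬ G.IsWinningStart p) :
    ∃ q, G.IE p q ∧ G.EvaderSafe p q := by
  simp only [IsWinningStart, hp, true_and, not_forall, not_or] at h
  obtain ⟨q, hq, hF, hsafe⟩ := h
  exact ⟨q, hq, hF, by simpa using hsafe⟩

lemma exists_isWinningStart_of_pursuerWins [Fintype PE] (h : G.PursuerWins) :
    ∃ p, G.IsWinningStart p := by
  by_contra hno
  obtain ⟨-, q₀, -⟩ := G.I_nonempty
  have hstart : ∀ p, ∃ q, G.IP p → G.IE p q ∧ G.EvaderSafe p q := by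
    intro p
    by_cases hp : G.IP p
    · exact (exists_evaderSafe_start hp fun hw => hno ⟨p, hw⟩).imp fun _ h _ => h
    · exact ⟨q₀, fun hp' => absurd hp' hp⟩
  choose init hinit using hstart
  obtain ⟨τ, rfl, hτv, hτ⟩ := exists_eStrat_safe (G := G) init
  obtain ⟨σ, ⟨hσ₀, hσ⟩, hwin⟩ := h
  obtain ⟨n, hn⟩ := hwin τ ⟨fun p hp => (hinit p hp).1, hτv⟩
  have hsafe := evaderSafe_pos_two_mul hσ hτ (hinit _ hσ₀).2
  obtain ⟨m, rfl | rfl⟩ := Nat.even_or_odd' n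
  · exact (hsafe m).1 hn
  · exact not_Rel_pos_two_mul_add_one hσ (hsafe m) (Rel_of_F hn)

lemma pursuerWins_iff_exists_isWinningStart [Fintype PE] :
    G.PursuerWins ↔ ∃ p, G.IsWinningStart p :=
  ⟨exists_isWinningStart_of_pursuerWins, fun ⟨_, hp⟩ => pursuerWins_of_isWinningStart hp⟩

end Evader

section PositionIndependent

def IsRemovableSeq (G : GCR PP PE) (GP : PP → Set PP) (GE : PE → Set PE)
    (L : List (PP × PE)) : Prop :=
  ∀ i (hi : i < L.length), G.Removable GP GE L[i] {w | w ∈ L.take i}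

variable {G : GCR PP PE} {p : PP} {GP : PP → Set PP} {GE : PE → Set PE}

lemma Removable.mono {v : PP × PE} {S T : Set (PP × PE)} (hST : S ⊆ T)
    (h : G.Removable GP GE v S) : G.Removable GP GE v T :=
  h.imp_right fun h x hx => (h x hx).imp_right fun ⟨y, hy, hyS⟩ => ⟨y, hy, hST hyS⟩

lemma removable_iff (hPI : G.PositionIndependent GP GE) {v : PP × PE} {S : Set (PP × PE)} :
    G.Removable GP GE v S ↔
      G.F v.1 v.2 ∨ ∀ x ∈ G.AE v.1 v.2, G.F v.1 x ∨ ∃ w ∈ G.AP v.1 x, (w, x) ∈ S := by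
  by_cases hF : G.F v.1 v.2
  · simp [Removable, hF]
  simp only [Removable, hF, false_or, (hPI _ _ hF).2]
  refine forall₂_congr fun x _ => ?_
  by_cases hFx : G.F v.1 x
  · simp [hFx]
  · simp [hFx, (hPI _ _ hFx).1]

lemma removableOrdering_iff {L : List (PP × PE)} :
    G.RemovableOrdering GP GE L ↔ G.IsRemovableSeq GP GE L ∧
      ∃ p, G.IP p ∧ ∀ q, G.IE p q → G.F p q ∨ ∃ w ∈ GP p, (w, q) ∈ L := by
  have hprefix : ∀ i, {w | ∃ j : Fin L.length, (j : ℕ) < i ∧ L[(j : ℕ)] = w} =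
      {w | w ∈ L.take i} := by
    intro i
    ext w
    simp only [Set.mem_ofPred_eq, List.mem_take_iff_getElem, Fin.exists_iff, Nat.lt_min]
    exact ⟨fun ⟨j, hj, hji, hw⟩ => ⟨j, ⟨hji, hj⟩, hw⟩, fun ⟨j, ⟨hji, hj⟩, hw⟩ => ⟨j, hj, hji, hw⟩⟩
  simp only [RemovableOrdering, IsRemovableSeq, Fin.forall_iff, List.get_eq_getElem, hprefix]

lemma isRemovableSeq_append_iff {L₁ L₂ : List (PP × PE)} :
    G.IsRemovableSeq GP GE (L₁ ++ L₂) ↔ G.IsRemovableSeq GP GE L₁ ∧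
      ∀ i (hi : i < L₂.length), G.Removable GP GE L₂[i] {w | w ∈ L₁ ++ L₂.take i} := by
  constructor
  · intro h
    refine ⟨fun i hi => ?_, fun i hi => ?_⟩
    · have := h i (by rw [List.length_append]; omega)
      rwa [List.getElem_append_left hi, List.take_append_of_le_length hi.le] at this
    · have := h (L₁.length + i) (by rw [List.length_append]; omega)
      rw [List.getElem_append_right (by omega), List.take_length_add_append] at this
      simpa using this
  · rintro ⟨h₁, h₂⟩ i hi
    rcases Nat.lt_or_ge i L₁.length with hi₁ | hi₁
    · rw [List.getElem_append_left hi₁, List.take_append_of_le_length hi₁.le]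
      exact h₁ i hi₁
    · obtain ⟨k, rfl⟩ := Nat.exists_eq_add_of_le hi₁
      rw [List.getElem_append_right hi₁, List.take_length_add_append]
      simpa using h₂ k (by rw [List.length_append] at hi; omega)

lemma IsRemovableSeq.nil : G.IsRemovableSeq GP GE [] :=
  fun _ hi => absurd hi (Nat.not_lt_zero _)

lemma IsRemovableSeq.append {L₁ L₂ : List (PP × PE)} (h₁ : G.IsRemovableSeq GP GE L₁)
    (h₂ : G.IsRemovableSeq GP GE L₂) : G.IsRemovableSeq GP GE (L₁ ++ L₂) :=
  isRemovableSeq_append_iff.2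
    ⟨h₁, fun i hi => (h₂ i hi).mono fun _ hw => List.mem_append_right _ hw⟩

lemma isRemovableSeq_concat_iff {L : List (PP × PE)} {v : PP × PE} :
    G.IsRemovableSeq GP GE (L ++ [v]) ↔
      G.IsRemovableSeq GP GE L ∧ G.Removable GP GE v {w | w ∈ L} := by
  simp [isRemovableSeq_append_iff]

lemma IsRemovableSeq.rel_of_mem [Fintype PE] (hPI : G.PositionIndependent GP GE)
    {L : List (PP × PE)} (hL : G.IsRemovableSeq GP GE L) {v : PP × PE} (hv : v ∈ L) :
    G.Rel v.2 v.1 := by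
  induction L using List.reverseRecOn generalizing v with
  | nil => cases hv
  | append_singleton L u ih =>
    rw [isRemovableSeq_concat_iff] at hL
    have hRel : ∀ w ∈ L, G.Rel w.2 w.1 := fun w hw => ih hL.1 hw
    rcases List.mem_append.1 hv with hv | hv
    · exact hRel v hv
    · rw [List.mem_singleton.1 hv]
      exact Rel_iff.2 ((removable_iff hPI).1 (hL.2.mono fun w hw => hRel w hw))

lemma exists_isRemovableSeq_forall [Fintype PE] {S : Set PP} {Q : PE → Prop}
    (h : ∀ x, Q x → ∃ y ∈ S, ∃ L, G.IsRemovableSeq GP GE L ∧ (y, x) ∈ L) :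
    ∃ L, G.IsRemovableSeq GP GE L ∧ ∀ x, Q x → ∃ y ∈ S, (y, x) ∈ L := by
  suffices ∀ s : Finset PE, ∃ L, G.IsRemovableSeq GP GE L ∧ ∀ x ∈ s, Q x → ∃ y ∈ S, (y, x) ∈ L by
    obtain ⟨L, hL, hs⟩ := this Finset.univ
    exact ⟨L, hL, fun x => hs x (Finset.mem_univ x)⟩
  intro s
  induction s using Finset.induction_on with
  | empty => exact ⟨[], IsRemovableSeq.nil, by simp⟩
  | insert x s _ ih =>
    obtain ⟨L, hL, hs⟩ := ih
    by_cases hx : Q x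
    · obtain ⟨y, hy, L', hL', hyL'⟩ := h x hx
      refine ⟨L ++ L', hL.append hL', fun x' hx' hQ => ?_⟩
      rcases Finset.mem_insert.1 hx' with rfl | hx'
      · exact ⟨y, hy, List.mem_append_right _ hyL'⟩
      · obtain ⟨y', hy', hyL⟩ := hs x' hx' hQ
        exact ⟨y', hy', List.mem_append_left _ hyL⟩
    · refine ⟨L, hL, fun x' hx' hQ => ?_⟩
      rcases Finset.mem_insert.1 hx' with rfl | hx'
      · exact absurd hQ hx
      · exact hs x' hx' hQ

lemma exists_isRemovableSeq_mem_of_removable [Fintype PE] {v : PP × PE} {S : Set (PP × PE)}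
    (h : G.Removable GP GE v S) (hS : ∀ u ∈ S, ∃ L, G.IsRemovableSeq GP GE L ∧ u ∈ L) :
    ∃ L, G.IsRemovableSeq GP GE L ∧ v ∈ L := by
  rcases h with hF | h
  · exact ⟨[v], isRemovableSeq_concat_iff (L := []).2 ⟨.nil, Or.inl hF⟩, List.mem_singleton_self v⟩
  obtain ⟨L, hL, hLv⟩ := exists_isRemovableSeq_forall (G := G) (S := GP v.1)
    (Q := fun x => x ∈ GE v.2 ∧ ¬ G.F v.1 x) fun x ⟨hx, hFx⟩ => by
      obtain ⟨y, hy, hyS⟩ := (h x hx).resolve_left hFx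
      exact ⟨y, hy, hS _ hyS⟩
  refine ⟨L ++ [v], isRemovableSeq_concat_iff.2 ⟨hL, Or.inr fun x hx => ?_⟩, by simp⟩
  exact or_iff_not_imp_left.2 fun hFx => hLv x ⟨hx, hFx⟩

lemma exists_isRemovableSeq_mem_of_rel [Fintype PE] (hPI : G.PositionIndependent GP GE)
    (n : ℕ) : ∀ v : PP × PE, G.rel n v.2 v.1 → ∃ L, G.IsRemovableSeq GP GE L ∧ v ∈ L := by
  induction n with
  | zero => exact fun v hv =>
      exists_isRemovableSeq_mem_of_removable (S := ∅) (Or.inl (rel_zero.1 hv)) (by simp)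
  | succ n ih => exact fun v hv =>
      exists_isRemovableSeq_mem_of_removable ((removable_iff hPI).2 (rel_succ_iff.1 hv)) ih

lemma exists_removableOrdering_of_isWinningStart [Fintype PE]
    (hPI : G.PositionIndependent GP GE) (hp : G.IsWinningStart p) :
    ∃ L, G.RemovableOrdering GP GE L := by
  obtain ⟨L, hL, hLp⟩ := exists_isRemovableSeq_forall (G := G) (S := GP p)
    (Q := fun q => G.IE p q ∧ ¬ G.F p q) fun q ⟨hq, hF⟩ => by
      obtain ⟨w, hw, n, hn⟩ := (hp.2 q hq).resolve_left hF
      exact ⟨w, (hPI p q hF).1 ▸ hw, exists_isRemovableSeq_mem_of_rel hPI n (w, q) hn⟩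
  exact ⟨L, removableOrdering_iff.2
    ⟨hL, p, hp.1, fun q hq => or_iff_not_imp_left.2 fun hF => hLp q ⟨hq, hF⟩⟩⟩

lemma exists_isWinningStart_of_removableOrdering [Fintype PE]
    (hPI : G.PositionIndependent GP GE) {L : List (PP × PE)}
    (hL : G.RemovableOrdering GP GE L) : ∃ p, G.IsWinningStart p := by
  obtain ⟨hL, p, hp, hstart⟩ := removableOrdering_iff.1 hL
  refine ⟨p, hp, fun q hq => (hstart q hq).elim Or.inl fun ⟨w, hw, hwL⟩ => ?_⟩
  by_cases hF : G.F p q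
  · exact Or.inl hF
  · exact Or.inr ⟨w, (hPI p q hF).1 ▸ hw, hL.rel_of_mem hPI hwL⟩

end PositionIndependent

theorem pursuerWins_iff_removableOrdering_general [Fintype PE] (G : GCR PP PE)
    (GP : PP → Set PP) (GE : PE → Set PE) (hPI : G.PositionIndependent GP GE) :
    G.PursuerWins ↔ ∃ L : List (PP × PE), G.RemovableOrdering GP GE L := by
  rw [pursuerWins_iff_exists_isWinningStart]
  exact ⟨fun ⟨_, hp⟩ => exists_removableOrdering_of_isWinningStart hPI hp,
    fun ⟨_, hL⟩ => exists_isWinningStart_of_removableOrdering hPI hL⟩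

/-- Corollary 4: the Pursuer has a winning strategy in a position independent game if
and only if the round summary digraph admits a removable vertex ordering. -/
theorem pursuerWins_iff_removableOrdering [Fintype PP] [Fintype PE] (G : GCR PP PE)
    (GP : PP → Set PP) (GE : PE → Set PE) (hPI : G.PositionIndependent GP GE) :
    G.PursuerWins ↔ ∃ L : List (PP × PE), G.RemovableOrdering GP GE L :=
  pursuerWins_iff_removableOrdering_general G GP GE hPI

end GCR
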